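/- arXiv:2412.13521 — 4 statements merged into one kernel-verified Lean document; each statement's English description precedes it below -/
import Mathlib

section
/- Let H(z₁,…,zₙ) = h(z₁, z₂ - z₁², …, ∑_{j=0}^{n} C(n,j)(-1)^j z₁^j z_{n-j}) where h is twice continuously differentiable. Then with the convention z₀ = 1, ∑_{i=1}^{n} ∑_{j=1}^{n} i·j·H_{z_i z_j}(z⃗)·z_{i-1}·z_{j-1} = h_{z₁z₁} - ∑_{k=2}^{n} k(k-1) h_{z_k} ∑_{i=0}^{k-2} C(k-2,i)(-1)^{k-2-i} z₁^{k-2-i} z_i, where the partial derivatives of h are evaluated at the transformed arguments. -/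
/-!
If `z` are the raw moments of a random variable `X`, then `v m = m z_{m-1}` is the velocity of the
raw moments of `X + t` at `t = 0`, and the left-hand side is `d²/dt² H(z + t v)` at `t = 0`.
Central moments do not see translations, so along this line the velocity of `T(z + t v)` at `0`
is `e₁` (only the mean moves), while its acceleration has `k`-th component
`-k(k-1) ∑ C(k-2,i) (-z₁)^{k-2-i} z_i` by binomial-coefficient bookkeeping. The chain rule for
`t ↦ h(T(z + t v))` then gives `h_{z₁z₁}` plus `Dh` applied to that acceleration.
-/

open Finset
open Fin.NatCast

theorem sum_choose_neg_one_pow_translation_deriv (k : ℕ) (x : ℝ) (a : ℕ → ℝ) :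
    ∑ j ∈ range (k + 1), (k.choose j : ℝ) * (-1) ^ j *
      (j * x ^ (j - 1) * a (k - j) + x ^ j * ((k - j : ℕ) * a (k - j - 1))) = 0 := by
  set f : ℕ → ℝ := fun j => (k.choose j : ℝ) * (-1) ^ j * (x ^ j * ((k - j : ℕ) * a (k - j - 1)))
  set g : ℕ → ℝ := fun j => (k.choose j : ℝ) * (-1) ^ j * (j * x ^ (j - 1) * a (k - j))
  have hg : ∀ j, g (j + 1) = -f j := fun j => by
    have hc : (k.choose (j + 1) : ℝ) * (j + 1) = k.choose j * (k - j : ℕ) := by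
      exact_mod_cast Nat.choose_succ_right_eq k j
    simp only [f, g, Nat.add_sub_cancel, Nat.sub_add_eq, pow_succ, Nat.cast_add_one]
    linear_combination -(x ^ j * a (k - j - 1) * (-1) ^ j) * hc
  calc _ = ∑ j ∈ range (k + 1), g j + ∑ j ∈ range (k + 1), f j := by
        rw [← sum_add_distrib]; exact sum_congr rfl fun j _ => by simp only [f, g]; ring
    _ = 0 := by
        rw [sum_range_succ', sum_range_succ f]
        simp [hg, f, g]

theorem sum_choose_neg_one_pow_translation_deriv2 (k : ℕ) (hk : 2 ≤ k) (x : ℝ) (a : ℕ → ℝ) :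
    ∑ j ∈ range (k + 1), (k.choose j : ℝ) * (-1) ^ j *
      (j * (j - 1 : ℕ) * x ^ (j - 2) * a (k - j)
        + 2 * j * x ^ (j - 1) * ((k - j : ℕ) * a (k - j - 1)))
    = -(k * (k - 1)) * ∑ i ∈ range (k - 1),
        ((k - 2).choose i : ℝ) * (-1) ^ (k - 2 - i) * x ^ (k - 2 - i) * a i := by
  obtain ⟨m, rfl⟩ : ∃ m, k = m + 2 := ⟨k - 2, by omega⟩
  set P : ℕ → ℝ := fun j => ((m + 2).choose j : ℝ) * (-1) ^ j *
    (j * (j - 1 : ℕ) * x ^ (j - 2) * a (m + 2 - j))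
  set Q : ℕ → ℝ := fun j => ((m + 2).choose j : ℝ) * (-1) ^ j *
    (2 * j * x ^ (j - 1) * ((m + 2 - j : ℕ) * a (m + 2 - j - 1)))
  have hQ : ∀ j, Q j = -2 * P (j + 1) := fun j => by
    have hc : ((m + 2).choose (j + 1) : ℝ) * (j + 1) = (m + 2).choose j * (m + 2 - j : ℕ) := by
      exact_mod_cast Nat.choose_succ_right_eq (m + 2) j
    simp only [P, Q, Nat.add_sub_cancel, Nat.sub_add_eq, pow_succ, Nat.cast_add_one,
      show j + 1 - 2 = j - 1 by omega]
    linear_combination -(2 * j * x ^ (j - 1) * a (m + 2 - j - 1) * (-1) ^ j) * hc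
  have hP : ∀ i, P (i + 2)
      = (m + 2) * (m + 1) * ((m.choose i : ℝ) * (-1) ^ i * x ^ i * a (m - i)) := fun i => by
    have hc : (m + 2) * (m + 1) * m.choose i = (m + 2).choose (i + 2) * ((i + 2) * (i + 1)) := by
      rw [mul_assoc, Nat.add_one_mul_choose_eq, ← mul_assoc, Nat.add_one_mul_choose_eq]; ring
    simp only [P, Nat.add_sub_cancel, Nat.add_sub_add_right, show i + 2 - 1 = i + 1 by omega,
      pow_add, neg_one_sq]
    push_cast
    linear_combination (-1) ^ i * x ^ i * a (m - i) * (by exact_mod_cast hc.symm :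
      ((m + 2).choose (i + 2) : ℝ) * ((i + 2) * (i + 1)) = (m + 2) * (m + 1) * m.choose i)
  have hP0 : P 0 = 0 := by simp [P]
  have hP1 : P 1 = 0 := by simp [P]
  have hsumQ : ∑ j ∈ range (m + 3), Q j = -2 * ∑ j ∈ range (m + 3), P j := by
    have hPtop : P (m + 3) = 0 := by simp [P]
    rw [sum_congr rfl fun j _ => hQ j, ← mul_sum, sum_range_succ (fun j => P (j + 1)),
      sum_range_succ' P, hP0, hPtop]
  calc _ = ∑ j ∈ range (m + 3), P j + ∑ j ∈ range (m + 3), Q j := by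
        rw [← sum_add_distrib]; exact sum_congr rfl fun j _ => by simp only [P, Q]; ring
    _ = -∑ i ∈ range (m + 1), P (i + 2) := by
        rw [hsumQ, sum_range_succ', sum_range_succ', hP0, hP1]; ring
    _ = _ := by
        simp only [hP, ← mul_sum, Nat.add_sub_cancel]
        have hreflect : ∑ i ∈ range (m + 1), (m.choose i : ℝ) * (-1) ^ i * x ^ i * a (m - i)
            = ∑ i ∈ range (m + 1), (m.choose i : ℝ) * (-1) ^ (m - i) * x ^ (m - i) * a i := by
          rw [← sum_range_reflect]
          refine sum_congr rfl fun i hi => ?_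
          have hi : i ≤ m := Nat.lt_succ_iff.mp (mem_range.mp hi)
          rw [Nat.add_sub_cancel, Nat.sub_sub_self hi, Nat.choose_symm hi]
        rw [hreflect, show m + 2 - 1 = m + 1 by omega]
        push_cast
        ring

section Calculus

variable {E F G : Type*} [NormedAddCommGroup E] [NormedSpace ℝ E] [NormedAddCommGroup F]
  [NormedSpace ℝ F] [NormedAddCommGroup G] [NormedSpace ℝ G]

theorem ContDiff.differentiable_fderiv_of_two {f : E → F} (hf : ContDiff ℝ 2 f) :
    Differentiable ℝ (fderiv ℝ f) :=
  (hf.fderiv_right (m := 1) (by norm_num)).differentiable one_ne_zero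

theorem fderiv_fderiv_apply_const {f : E → F} {z : E} (hf : DifferentiableAt ℝ (fderiv ℝ f) z)
    (u v : E) : fderiv ℝ (fun w => fderiv ℝ f w u) z v = fderiv ℝ (fderiv ℝ f) z v u := by
  simp [fderiv_clm_apply hf (differentiableAt_const u)]

theorem fderiv_fderiv_apply_eq_sum {ι : Type*} [Fintype ι] [DecidableEq ι] {f : (ι → ℝ) → F}
    {z : ι → ℝ} (hf : DifferentiableAt ℝ (fderiv ℝ f) z) (u v : ι → ℝ) :
    fderiv ℝ (fderiv ℝ f) z u v = ∑ i, ∑ j, (u i * v j) •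
      fderiv ℝ (fun w => fderiv ℝ f w (Pi.single j 1)) z (Pi.single i 1) := by
  conv_lhs => rw [pi_eq_sum_univ' u, pi_eq_sum_univ' v]
  simp only [map_sum, map_smul, _root_.sum_apply, _root_.smul_apply,
    smul_sum, fderiv_fderiv_apply_const hf, mul_smul]
  rw [Finset.sum_comm]
  exact sum_congr rfl fun i _ => sum_congr rfl fun j _ => smul_comm _ _ _

theorem hasDerivAt_fderiv_apply_comp {f : E → F} {c c' : ℝ → E} {c'' : E} {t : ℝ}
    (hf : DifferentiableAt ℝ (fderiv ℝ f) (c t)) (hc : HasDerivAt c (c' t) t)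
    (hc' : HasDerivAt c' c'' t) :
    HasDerivAt (fun s => fderiv ℝ f (c s) (c' s))
      (fderiv ℝ (fderiv ℝ f) (c t) (c' t) (c' t) + fderiv ℝ f (c t) c'') t :=
  (hf.hasFDerivAt.comp_hasDerivAt t hc).clm_apply hc'

theorem hasDerivAt_line (z v : E) (t : ℝ) : HasDerivAt (fun s : ℝ => z + s • v) v t := by
  simpa using ((hasDerivAt_id t).smul_const v).const_add z

theorem hasDerivAt_line_apply {ι : Type*} (w v : ι → ℝ) (i : ι) (t : ℝ) :
    HasDerivAt (fun s : ℝ => (w + s • v) i) (v i) t := by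
  simpa using ((hasDerivAt_id t).mul_const (v i)).const_add (w i)

theorem fderiv_fderiv_comp_apply {h : F → G} {g : E → F} (hh : ContDiff ℝ 2 h)
    (hg : ContDiff ℝ 2 g) {z v : E} {γ' : ℝ → F} {γ'' : F}
    (hγ : ∀ s : ℝ, HasDerivAt (fun s => g (z + s • v)) (γ' s) s) (hγ' : HasDerivAt γ' γ'' 0) :
    fderiv ℝ (fderiv ℝ (h ∘ g)) z v v
      = fderiv ℝ (fderiv ℝ h) (g z) (γ' 0) (γ' 0) + fderiv ℝ h (g z) γ'' := by
  have hhg : ContDiff ℝ 2 (h ∘ g) := hh.comp hg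
  have hfst : ∀ s : ℝ, fderiv ℝ (h ∘ g) (z + s • v) v = fderiv ℝ h (g (z + s • v)) (γ' s) :=
    fun s => ((hhg.differentiable two_ne_zero _).hasFDerivAt.comp_hasDerivAt s
      (hasDerivAt_line z v s)).unique
      ((hh.differentiable two_ne_zero _).hasFDerivAt.comp_hasDerivAt s (hγ s))
  have hline := hasDerivAt_fderiv_apply_comp (f := h ∘ g) (c' := fun _ => v) (t := 0)
    (hhg.differentiable_fderiv_of_two _)
    (hasDerivAt_line z v 0) (hasDerivAt_const 0 v)
  have hcurve := hasDerivAt_fderiv_apply_comp (t := 0) (hh.differentiable_fderiv_of_two _) (hγ 0) hγ'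
  simp only [hfst, zero_smul, add_zero, map_zero] at hline hcurve
  exact hline.unique hcurve

end Calculus

theorem Fin.sum_univ_eq_sum_Icc_of_lt {M : Type*} [AddCommMonoid M] {n m : ℕ}
    (g : Fin (n + 1) → M) (hg : ∀ i : Fin (n + 1), (i : ℕ) < m → g i = 0) :
    ∑ i, g i = ∑ i ∈ Icc m n, g i := by
  calc ∑ i, g i = ∑ i ∈ range (n + 1), g i := by
        rw [← Fin.sum_univ_eq_sum_range (fun i => g i)]; simp
    _ = ∑ i ∈ Icc m n, g i := by
        refine (sum_subset (f := fun i : ℕ => g i) (fun i hi => ?_) fun i hi hiI => hg i ?_).symm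
        · simp only [mem_Icc, mem_range] at hi ⊢; omega
        · simp only [mem_Icc, mem_range, not_and_or, not_le] at hi hiI
          rw [Fin.val_cast_of_lt hi]; omega

section CentralMoments

variable (n : ℕ)

noncomputable def centralMoments (z : Fin (n + 1) → ℝ) (k : Fin (n + 1)) : ℝ :=
  if (k : ℕ) ≤ 1 then z k
  else ∑ j ∈ range ((k : ℕ) + 1),
    (Nat.choose (k : ℕ) j : ℝ) * (-1) ^ j * (z 1) ^ j * z ((((k : ℕ) - j : ℕ)) : Fin (n + 1))

noncomputable def centralMomentsDeriv (w v : Fin (n + 1) → ℝ) (k : Fin (n + 1)) : ℝ :=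
  if (k : ℕ) ≤ 1 then v k
  else ∑ j ∈ range ((k : ℕ) + 1), (Nat.choose (k : ℕ) j : ℝ) * (-1) ^ j *
    (j * w 1 ^ (j - 1) * v 1 * w (((k : ℕ) - j : ℕ)) + w 1 ^ j * v (((k : ℕ) - j : ℕ)))

noncomputable def centralMomentsDeriv2 (w v : Fin (n + 1) → ℝ) (k : Fin (n + 1)) : ℝ :=
  if (k : ℕ) ≤ 1 then 0
  else ∑ j ∈ range ((k : ℕ) + 1), (Nat.choose (k : ℕ) j : ℝ) * (-1) ^ j *
    (j * (j - 1 : ℕ) * w 1 ^ (j - 2) * v 1 ^ 2 * w (((k : ℕ) - j : ℕ))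
      + 2 * j * w 1 ^ (j - 1) * v 1 * v (((k : ℕ) - j : ℕ)))

variable {n}

theorem contDiff_centralMoments : ContDiff ℝ 2 (centralMoments n) := by
  refine contDiff_pi.2 fun k => ?_
  unfold centralMoments
  split_ifs <;> fun_prop

theorem hasDerivAt_centralMoments_line (w v : Fin (n + 1) → ℝ) (t : ℝ) :
    HasDerivAt (fun s => centralMoments n (w + s • v))
      (centralMomentsDeriv n (w + t • v) v) t := by
  refine hasDerivAt_pi.2 fun k => ?_
  unfold centralMoments centralMomentsDeriv
  split_ifs
  · exact hasDerivAt_line_apply w v k t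
  · refine HasDerivAt.fun_sum fun j _ => ?_
    have hx := (hasDerivAt_line_apply w v 1 t).fun_pow j
    have ha := hasDerivAt_line_apply w v (((k : ℕ) - j : ℕ) : Fin (n + 1)) t
    exact ((hx.const_mul ((k : ℕ).choose j * (-1) ^ j : ℝ)).fun_mul ha).congr_deriv (by ring)

theorem hasDerivAt_centralMomentsDeriv_line (w v : Fin (n + 1) → ℝ) (t : ℝ) :
    HasDerivAt (fun s : ℝ => centralMomentsDeriv n (w + s • v) v)
      (centralMomentsDeriv2 n (w + t • v) v) t := by
  refine hasDerivAt_pi.2 fun k => ?_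
  unfold centralMomentsDeriv centralMomentsDeriv2
  split_ifs
  · exact hasDerivAt_const t _
  · refine HasDerivAt.fun_sum fun j _ => ?_
    have hx := hasDerivAt_line_apply w v 1 t
    have ha := hasDerivAt_line_apply w v (((k : ℕ) - j : ℕ) : Fin (n + 1)) t
    refine (((((hx.fun_pow (j - 1)).const_mul (j : ℝ)).mul_const (v 1)).fun_mul ha |>.fun_add
      ((hx.fun_pow j).mul_const _)).const_mul ((k : ℕ).choose j * (-1) ^ j : ℝ)).congr_deriv ?_
    rw [show j - 1 - 1 = j - 2 by omega]
    ring

noncomputable def translationVelocity (z : Fin (n + 1) → ℝ) (m : Fin (n + 1)) : ℝ :=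
  (m : ℕ) * z ((m : ℕ) - 1 : ℕ)

theorem translationVelocity_natCast (z : Fin (n + 1) → ℝ) {m : ℕ} (hm : m < n + 1) :
    translationVelocity z m = m * z (m - 1 : ℕ) := by
  rw [translationVelocity, Fin.val_cast_of_lt hm]

theorem translationVelocity_zero (z : Fin (n + 1) → ℝ) : translationVelocity z 0 = 0 := by
  simp [translationVelocity]

theorem translationVelocity_one (hn : 1 ≤ n) {z : Fin (n + 1) → ℝ} (hz0 : z 0 = 1) :
    translationVelocity z 1 = 1 := by
  simpa [hz0] using translationVelocity_natCast z (m := 1) (by omega)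

theorem centralMomentsDeriv_translationVelocity (hn : 1 ≤ n) {z : Fin (n + 1) → ℝ}
    (hz0 : z 0 = 1) : centralMomentsDeriv n z (translationVelocity z) = Pi.single 1 1 := by
  have hval1 : ((1 : Fin (n + 1)) : ℕ) = 1 := by rw [Fin.val_one', Nat.mod_eq_of_lt (by omega)]
  funext k
  unfold centralMomentsDeriv
  split_ifs with hk
  · rcases Nat.le_one_iff_eq_zero_or_eq_one.1 hk with hk | hk
    · obtain rfl : k = 0 := Fin.ext hk
      rw [translationVelocity_zero, Pi.single_eq_of_ne (Fin.ne_of_val_ne (by simp; omega))]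
    · obtain rfl : k = 1 := Fin.ext (hk.trans hval1.symm)
      rw [Pi.single_eq_same, translationVelocity_one hn hz0]
  · rw [Pi.single_eq_of_ne (Fin.ne_of_val_ne (by omega)),
      ← sum_choose_neg_one_pow_translation_deriv k (z 1) (fun i => z i)]
    refine sum_congr rfl fun j hj => ?_
    rw [translationVelocity_one hn hz0,
      translationVelocity_natCast z (by have := k.isLt; omega), Nat.sub_sub]
    ring

theorem centralMomentsDeriv2_translationVelocity (hn : 1 ≤ n) {z : Fin (n + 1) → ℝ}
    (hz0 : z 0 = 1) {k : ℕ} (hk : 2 ≤ k) (hkn : k ≤ n) :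
    centralMomentsDeriv2 n z (translationVelocity z) k = -(k * (k - 1)) * ∑ i ∈ range (k - 1),
      ((k - 2).choose i : ℝ) * (-1) ^ (k - 2 - i) * z 1 ^ (k - 2 - i) * z i := by
  rw [centralMomentsDeriv2, Fin.val_cast_of_lt (by omega), if_neg (by omega),
    ← sum_choose_neg_one_pow_translation_deriv2 k hk (z 1) (fun i => z i)]
  refine sum_congr rfl fun j hj => ?_
  rw [translationVelocity_one hn hz0, translationVelocity_natCast z (by omega), Nat.sub_sub]
  ring

theorem sum_Icc_mul_fderiv_fderiv_single_eq {f : (Fin (n + 1) → ℝ) → ℝ} {z : Fin (n + 1) → ℝ}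
    (hf : DifferentiableAt ℝ (fderiv ℝ f) z) :
    ∑ i ∈ Icc 1 n, ∑ j ∈ Icc 1 n, (i : ℝ) * (j : ℝ) *
        (fderiv ℝ (fun w => fderiv ℝ f w (Pi.single ((j : ℕ) : Fin (n + 1)) 1)) z
          (Pi.single ((i : ℕ) : Fin (n + 1)) 1))
        * z (((i - 1 : ℕ)) : Fin (n + 1)) * z (((j - 1 : ℕ)) : Fin (n + 1))
      = fderiv ℝ (fderiv ℝ f) z (translationVelocity z) (translationVelocity z) := by
  have hv0 : ∀ i : Fin (n + 1), (i : ℕ) < 1 → translationVelocity z i = 0 := fun i hi => by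
    simp [translationVelocity, Nat.lt_one_iff.mp hi]
  rw [fderiv_fderiv_apply_eq_sum hf,
    Fin.sum_univ_eq_sum_Icc_of_lt (m := 1) _ fun i hi => by simp [hv0 i hi]]
  refine sum_congr rfl fun i hi => ?_
  rw [Fin.sum_univ_eq_sum_Icc_of_lt (m := 1) _ fun j hj => by simp [hv0 j hj]]
  refine sum_congr rfl fun j hj => ?_
  simp only [mem_Icc] at hi hj
  rw [translationVelocity_natCast z (by omega), translationVelocity_natCast z (by omega),
    smul_eq_mul]
  ring

theorem apply_centralMomentsDeriv2_translationVelocity (hn : 1 ≤ n) {z : Fin (n + 1) → ℝ}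
    (hz0 : z 0 = 1) (L : (Fin (n + 1) → ℝ) →L[ℝ] ℝ) :
    L (centralMomentsDeriv2 n z (translationVelocity z))
      = -∑ k ∈ Icc 2 n, (k : ℝ) * ((k : ℝ) - 1) * L (Pi.single ((k : ℕ) : Fin (n + 1)) 1) *
          ∑ i ∈ range (k - 1), (Nat.choose (k - 2) i : ℝ) * (-1) ^ (k - 2 - i) *
            (z 1) ^ (k - 2 - i) * z ((i : ℕ) : Fin (n + 1)) := by
  conv_lhs => rw [pi_eq_sum_univ' (centralMomentsDeriv2 n z (translationVelocity z))]
  simp only [map_sum, map_smul, smul_eq_mul]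
  rw [Fin.sum_univ_eq_sum_Icc_of_lt (m := 2) _ fun k hk => by
    simp [centralMomentsDeriv2, show (k : ℕ) ≤ 1 by omega], ← sum_neg_distrib]
  refine sum_congr rfl fun k hk => ?_
  simp only [mem_Icc] at hk
  rw [centralMomentsDeriv2_translationVelocity hn hz0 hk.1 hk.2]
  ring

end CentralMoments

/-- The second-derivative identity for the raw-moments-to-central-moments change of
variables: with `H = h ∘ T`, `T(z)_k = ∑_{j=0}^k C(k,j)(-1)^j z₁^j z_{k-j}` (k ≥ 2),
`z₀ = 1`, one has
`∑_{i,j=1}^n i j H_{z_i z_j}(z) z_{i-1} z_{j-1}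
  = h_{z₁z₁}(Tz) - ∑_{k=2}^n k(k-1) h_{z_k}(Tz) ∑_{i=0}^{k-2} C(k-2,i)(-1)^{k-2-i} z₁^{k-2-i} z_i`. -/
theorem stmt2 (n : ℕ) (hn : 2 ≤ n)
    (h : (Fin (n + 1) → ℝ) → ℝ) (hh : ContDiff ℝ 2 h)
    (T : (Fin (n + 1) → ℝ) → (Fin (n + 1) → ℝ))
    (hT : ∀ (z : Fin (n + 1) → ℝ) (k : Fin (n + 1)),
      T z k = if (k : ℕ) ≤ 1 then z k
        else ∑ j ∈ range ((k : ℕ) + 1),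
          (Nat.choose (k : ℕ) j : ℝ) * (-1) ^ j * (z 1) ^ j * z ((((k : ℕ) - j : ℕ)) : Fin (n + 1)))
    (H : (Fin (n + 1) → ℝ) → ℝ) (hH : H = h ∘ T)
    (z : Fin (n + 1) → ℝ) (hz0 : z 0 = 1) :
    ∑ i ∈ Icc 1 n, ∑ j ∈ Icc 1 n, (i : ℝ) * (j : ℝ) *
        (fderiv ℝ (fun w => fderiv ℝ H w (Pi.single ((j : ℕ) : Fin (n + 1)) 1)) z
          (Pi.single ((i : ℕ) : Fin (n + 1)) 1))
        * z (((i - 1 : ℕ)) : Fin (n + 1)) * z (((j - 1 : ℕ)) : Fin (n + 1))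
    = fderiv ℝ (fun w => fderiv ℝ h w (Pi.single (1 : Fin (n + 1)) 1)) (T z)
        (Pi.single (1 : Fin (n + 1)) 1)
      - ∑ k ∈ Icc 2 n, (k : ℝ) * ((k : ℝ) - 1) *
          (fderiv ℝ h (T z) (Pi.single ((k : ℕ) : Fin (n + 1)) 1)) *
          ∑ i ∈ range (k - 1), (Nat.choose (k - 2) i : ℝ) * (-1) ^ (k - 2 - i) *
            (z 1) ^ (k - 2 - i) * z ((i : ℕ) : Fin (n + 1)) := by
  obtain rfl : T = centralMoments n := funext fun w => funext (hT w)
  subst hH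
  have hn1 : 1 ≤ n := by omega
  set v := translationVelocity z
  have hγ'' : HasDerivAt (fun s : ℝ => centralMomentsDeriv n (z + s • v) v)
      (centralMomentsDeriv2 n z v) 0 := by
    simpa using hasDerivAt_centralMomentsDeriv_line z v 0
  rw [sum_Icc_mul_fderiv_fderiv_single_eq
      ((hh.comp contDiff_centralMoments).differentiable_fderiv_of_two z),
    fderiv_fderiv_comp_apply hh contDiff_centralMoments (hasDerivAt_centralMoments_line z _) hγ'',
    apply_centralMomentsDeriv2_translationVelocity hn1 hz0, zero_smul, add_zero,
    centralMomentsDeriv_translationVelocity hn1 hz0,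
    fderiv_fderiv_apply_const (hh.differentiable_fderiv_of_two _)]
  ring
end

section
/- Let f : [0,T] × [0,∞) → ℝ be strictly positive, continuous, and uniformly bounded, such that |f(t,·)|² is locally Lipschitz on bounded intervals, and let D : [0,T] → ℝ be continuous with inf|D| > 0, B : [0,T] → ℝ continuous, κ > 0. Then there is a unique continuous function β : [0,T] → ℝ satisfying the integral equation |D_t|² β_t = κ B_t f(t, ∫_t^T |D_s β_s|² ds) for all t ∈ [0,T]. -/
/-!
Setting `y t = ∫ s in t..T, (D s * β s) ^ 2`, the integral equation says exactly that
`β t = κ B t f(t, y t) / D t ^ 2` and that `y` solves the backward integral equation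
`y t = ∫ s in t..T, (κ B s / D s) ^ 2 f(s, y s) ^ 2`. Its right-hand side is nonnegative and bounded
by some `C`, so every nonnegative solution stays in `[0, C T]`, where it is Lipschitz in `y`.
Picard–Lindelöf gives a solution, and Gronwall's inequality makes it unique.
-/

open Set Function Metric

theorem continuousOn_integral_left {E : Type*} [NormedAddCommGroup E] [NormedSpace ℝ E]
    {φ : ℝ → E} {a b : ℝ} (hφ : ContinuousOn φ (Icc a b)) :
    ContinuousOn (fun t ↦ ∫ s in t..b, φ s) (Icc a b) := by
  rcases le_or_gt a b with hab | hba
  · rw [← uIcc_of_le hab] at hφ ⊢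
    exact intervalIntegral.continuousOn_primitive_interval_left hφ.integrableOn_uIcc
  · simp [Icc_eq_empty_of_lt hba]

section BackwardIntegralEquation

variable {E : Type*} [NormedAddCommGroup E] [NormedSpace ℝ E]
  {g : ℝ → E → E} {a b : ℝ} {u : Set E} {y z : ℝ → E}

theorem picard_neg_eq_integral (t : ℝ) :
    ODE.picard (fun s x ↦ -g s x) b 0 y t = ∫ s in t..b, g s (y s) := by
  rw [ODE.picard_apply, zero_add, intervalIntegral.integral_neg, intervalIntegral.integral_symm,
    neg_neg]

variable [CompleteSpace E]

theorem hasDerivWithinAt_of_eq_integral (hg : ContinuousOn (uncurry g) (Icc a b ×ˢ u))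
    (hy : ContinuousOn y (Icc a b)) (hyu : MapsTo y (Icc a b) u)
    (hy_eq : ∀ t ∈ Icc a b, y t = ∫ s in t..b, g s (y s)) {t : ℝ} (ht : t ∈ Icc a b) :
    HasDerivWithinAt y (-g t (y t)) (Icc a b) t := by
  have hb : b ∈ Icc a b := ⟨ht.1.trans ht.2, le_rfl⟩
  refine (ODE.hasDerivWithinAt_picard_Icc (f := fun s x ↦ -g s x) hb hg.neg hy hyu 0 ht
    ).congr_of_mem (fun s hs ↦ ?_) ht
  rw [picard_neg_eq_integral, hy_eq s hs]

theorem eqOn_of_eq_integral {K : NNReal} (hg : ContinuousOn (uncurry g) (Icc a b ×ˢ u))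
    (hg_lip : ∀ t ∈ Icc a b, LipschitzOnWith K (g t) u)
    (hy : ContinuousOn y (Icc a b)) (hyu : MapsTo y (Icc a b) u)
    (hy_eq : ∀ t ∈ Icc a b, y t = ∫ s in t..b, g s (y s))
    (hz : ContinuousOn z (Icc a b)) (hzu : MapsTo z (Icc a b) u)
    (hz_eq : ∀ t ∈ Icc a b, z t = ∫ s in t..b, g s (z s)) :
    EqOn y z (Icc a b) := by
  intro t ht
  have hb : b ∈ Icc a b := ⟨ht.1.trans ht.2, le_rfl⟩
  have hleft {t} (ht : t ∈ Ioc a b) : Icc a b ∈ nhdsWithin t (Iic t) :=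
    mem_nhdsWithin.2 ⟨Ioi a, isOpen_Ioi, ht.1, fun s hs ↦ ⟨hs.1.le, hs.2.trans ht.2⟩⟩
  refine ODE_solution_unique_of_mem_Icc_left (v := fun s x ↦ -g s x) (s := fun _ ↦ u)
    (fun s hs ↦ (hg_lip s (Ioc_subset_Icc_self hs)).neg) hy
    (fun s hs ↦ (hasDerivWithinAt_of_eq_integral hg hy hyu hy_eq
      (Ioc_subset_Icc_self hs)).mono_of_mem_nhdsWithin (hleft hs))
    (fun s hs ↦ hyu (Ioc_subset_Icc_self hs)) hz
    (fun s hs ↦ (hasDerivWithinAt_of_eq_integral hg hz hzu hz_eq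
      (Ioc_subset_Icc_self hs)).mono_of_mem_nhdsWithin (hleft hs))
    (fun s hs ↦ hzu (Ioc_subset_Icc_self hs)) ?_ ht
  rw [hy_eq b hb, hz_eq b hb, intervalIntegral.integral_same, intervalIntegral.integral_same]

theorem exists_continuousOn_eq_integral {K : NNReal} {C : ℝ} (hab : a ≤ b) (hC : 0 ≤ C)
    (hg : ContinuousOn (uncurry g) (Icc a b ×ˢ univ))
    (hg_lip : ∀ t ∈ Icc a b, LipschitzOnWith K (g t) (closedBall 0 (C * (b - a))))
    (hg_le : ∀ t ∈ Icc a b, ∀ x ∈ closedBall 0 (C * (b - a)), ‖g t x‖ ≤ C) :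
    ∃ y : ℝ → E, ContinuousOn y (Icc a b) ∧ ∀ t ∈ Icc a b, y t = ∫ s in t..b, g s (y s) := by
  have hR : 0 ≤ C * (b - a) := mul_nonneg hC (sub_nonneg.2 hab)
  have hPL : IsPicardLindelof (fun s x ↦ -g s x) ⟨b, hab, le_rfl⟩ 0 (C * (b - a)).toNNReal 0
      C.toNNReal K := by
    refine ⟨fun t ht ↦ ?_, fun x _ ↦ ?_, fun t ht x hx ↦ ?_, ?_⟩
    · rw [Real.coe_toNNReal _ hR]
      exact (hg_lip t ht).neg
    · exact hg.neg.comp (continuousOn_id.prodMk continuousOn_const) fun t ht ↦ ⟨ht, mem_univ x⟩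
    · rw [Real.coe_toNNReal _ hR] at hx
      rw [norm_neg, Real.coe_toNNReal _ hC]
      exact hg_le t ht x hx
    · rw [Real.coe_toNNReal _ hC, Real.coe_toNNReal _ hR, NNReal.coe_zero, sub_zero, sub_self,
        max_eq_right (sub_nonneg.2 hab)]
  obtain ⟨y, hyb, hy⟩ := hPL.exists_eq_forall_mem_Icc_hasDerivWithinAt₀
  refine ⟨y, fun t ht ↦ (hy t ht).continuousWithinAt, fun t ht ↦ ?_⟩
  have hsub : uIcc b t ⊆ Icc a b := uIcc_subset_Icc ⟨hab, le_rfl⟩ ht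
  rw [← ODE.picard_eq_of_hasDerivAt (f := fun s x ↦ -g s x) (α := y)
    (hg.neg.mono (prod_mono hsub subset_rfl)) (fun s hs ↦ (hy s (hsub hs)).mono hsub)
    (mapsTo_univ _ _), hyb, picard_neg_eq_integral]

end BackwardIntegralEquation

section Nonneg

variable {G : ℝ → ℝ → ℝ} {a b C : ℝ} {K : NNReal}

theorem integral_mem_Icc_of_nonneg_of_le {φ : ℝ → ℝ} {t : ℝ} (ht : t ∈ Icc a b)
    (hφ_nonneg : ∀ s ∈ Icc t b, 0 ≤ φ s) (hφ_le : ∀ s ∈ Icc t b, φ s ≤ C) :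
    ∫ s in t..b, φ s ∈ Icc 0 (C * (b - a)) := by
  have hC : 0 ≤ C := (hφ_nonneg b ⟨ht.2, le_rfl⟩).trans (hφ_le b ⟨ht.2, le_rfl⟩)
  refine ⟨intervalIntegral.integral_nonneg ht.2 hφ_nonneg, ?_⟩
  calc ∫ s in t..b, φ s ≤ ‖∫ s in t..b, φ s‖ := Real.le_norm_self _
    _ ≤ C * |b - t| := intervalIntegral.norm_integral_le_of_norm_le_const fun s hs ↦ by
        rw [uIoc_of_le ht.2] at hs
        rw [Real.norm_of_nonneg (hφ_nonneg s (Ioc_subset_Icc_self hs))]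
        exact hφ_le s (Ioc_subset_Icc_self hs)
    _ ≤ C * (b - a) := by
        rw [abs_of_nonneg (sub_nonneg.2 ht.2)]
        exact mul_le_mul_of_nonneg_left (by linarith [ht.1]) hC

theorem exists_nonneg_eq_integral
    (hG : ContinuousOn (uncurry G) (Icc a b ×ˢ Ici 0))
    (hG_nonneg : ∀ t ∈ Icc a b, ∀ y, 0 ≤ y → 0 ≤ G t y)
    (hG_le : ∀ t ∈ Icc a b, ∀ y, 0 ≤ y → G t y ≤ C)
    (hG_lip : ∀ t ∈ Icc a b, LipschitzOnWith K (G t) (Icc 0 (C * (b - a)))) :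
    ∃ y : ℝ → ℝ, ContinuousOn y (Icc a b) ∧ MapsTo y (Icc a b) (Ici 0) ∧
      ∀ t ∈ Icc a b, y t = ∫ s in t..b, G s (y s) := by
  rcases lt_or_ge b a with hba | hab
  · exact ⟨0, by simp [Icc_eq_empty_of_lt hba, mapsTo_empty]⟩
  have hC : 0 ≤ C := (hG_nonneg a ⟨le_rfl, hab⟩ 0 le_rfl).trans (hG_le a ⟨le_rfl, hab⟩ 0 le_rfl)
  have hR : 0 ≤ C * (b - a) := mul_nonneg hC (sub_nonneg.2 hab)
  -- `G` is only controlled on `y ≥ 0`, so solve with `y` clamped from below and check a posteriori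
  -- that the solution never leaves `Ici 0`.
  obtain ⟨y, hy, hy_eq⟩ :=
    exists_continuousOn_eq_integral (g := fun t x ↦ G t (max x 0)) (K := K) hab hC
      (hG.comp (continuousOn_fst.prodMk (continuous_snd.max continuous_const).continuousOn)
        fun p hp ↦ ⟨hp.1, mem_Ici.2 (le_max_right _ _)⟩)
      (fun t ht ↦ by
        simpa [comp_def] using (hG_lip t ht).comp (LipschitzWith.id.max_const 0).lipschitzOnWith
          fun x hx ↦ ⟨le_max_right _ _, max_le (le_of_abs_le (mem_closedBall_zero_iff.1 hx)) hR⟩)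
      (fun t ht x _ ↦ by
        rw [Real.norm_of_nonneg (hG_nonneg t ht _ (le_max_right _ _))]
        exact hG_le t ht _ (le_max_right _ _))
  have hy_nonneg : MapsTo y (Icc a b) (Ici 0) := fun t ht ↦ by
    rw [hy_eq t ht]
    exact intervalIntegral.integral_nonneg ht.2 fun s hs ↦
      hG_nonneg s ⟨ht.1.trans hs.1, hs.2⟩ _ (le_max_right _ _)
  refine ⟨y, hy, hy_nonneg, fun t ht ↦ (hy_eq t ht).trans ?_⟩
  refine intervalIntegral.integral_congr fun s hs ↦ ?_
  rw [uIcc_of_le ht.2] at hs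
  rw [max_eq_left (mem_Ici.1 (hy_nonneg ⟨ht.1.trans hs.1, hs.2⟩))]

theorem mapsTo_Icc_of_nonneg_eq_integral {y : ℝ → ℝ}
    (hG_nonneg : ∀ t ∈ Icc a b, ∀ y, 0 ≤ y → 0 ≤ G t y)
    (hG_le : ∀ t ∈ Icc a b, ∀ y, 0 ≤ y → G t y ≤ C) (hy_nonneg : MapsTo y (Icc a b) (Ici 0))
    (hy_eq : ∀ t ∈ Icc a b, y t = ∫ s in t..b, G s (y s)) :
    MapsTo y (Icc a b) (Icc 0 (C * (b - a))) := fun t ht ↦ by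
  have hsub : Icc t b ⊆ Icc a b := Icc_subset_Icc_left ht.1
  rw [hy_eq t ht]
  exact integral_mem_Icc_of_nonneg_of_le ht
    (fun s hs ↦ hG_nonneg s (hsub hs) _ (hy_nonneg (hsub hs)))
    (fun s hs ↦ hG_le s (hsub hs) _ (hy_nonneg (hsub hs)))

theorem eqOn_of_nonneg_eq_integral {y z : ℝ → ℝ}
    (hG : ContinuousOn (uncurry G) (Icc a b ×ˢ Ici 0))
    (hG_nonneg : ∀ t ∈ Icc a b, ∀ y, 0 ≤ y → 0 ≤ G t y)
    (hG_le : ∀ t ∈ Icc a b, ∀ y, 0 ≤ y → G t y ≤ C)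
    (hG_lip : ∀ t ∈ Icc a b, LipschitzOnWith K (G t) (Icc 0 (C * (b - a))))
    (hy : ContinuousOn y (Icc a b)) (hy_nonneg : MapsTo y (Icc a b) (Ici 0))
    (hy_eq : ∀ t ∈ Icc a b, y t = ∫ s in t..b, G s (y s))
    (hz : ContinuousOn z (Icc a b)) (hz_nonneg : MapsTo z (Icc a b) (Ici 0))
    (hz_eq : ∀ t ∈ Icc a b, z t = ∫ s in t..b, G s (z s)) :
    EqOn y z (Icc a b) :=
  eqOn_of_eq_integral (hG.mono (prod_mono subset_rfl Icc_subset_Ici_self)) hG_lip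
    hy (mapsTo_Icc_of_nonneg_eq_integral hG_nonneg hG_le hy_nonneg hy_eq) hy_eq
    hz (mapsTo_Icc_of_nonneg_eq_integral hG_nonneg hG_le hz_nonneg hz_eq) hz_eq

end Nonneg

section Driver

variable {κ : ℝ} {B D : ℝ → ℝ} {f : ℝ → ℝ → ℝ}

noncomputable def betaOf (κ : ℝ) (B D : ℝ → ℝ) (f : ℝ → ℝ → ℝ) (t y : ℝ) : ℝ :=
  κ * B t * f t y / D t ^ 2

noncomputable def driver (κ : ℝ) (B D : ℝ → ℝ) (f : ℝ → ℝ → ℝ) (t y : ℝ) : ℝ :=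
  (κ * B t / D t) ^ 2 * f t y ^ 2

theorem sq_mul_betaOf (t y : ℝ) : (D t * betaOf κ B D f t y) ^ 2 = driver κ B D f t y := by
  rcases eq_or_ne (D t) 0 with hD | hD
  · simp [betaOf, driver, hD]
  · rw [betaOf, driver]
    field_simp

theorem sq_mul_eq_iff_eq_betaOf {t y β : ℝ} (hD : D t ≠ 0) :
    D t ^ 2 * β = κ * B t * f t y ↔ β = betaOf κ B D f t y := by
  rw [betaOf, eq_div_iff (pow_ne_zero 2 hD), mul_comm]

theorem continuousOn_betaOf {s : Set ℝ} {y : ℝ → ℝ} (hB : ContinuousOn B s)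
    (hD : ContinuousOn D s) (hD0 : ∀ t ∈ s, D t ≠ 0)
    (hf : ContinuousOn (uncurry f) (s ×ˢ Ici 0)) (hy : ContinuousOn y s)
    (hy_nonneg : MapsTo y s (Ici 0)) :
    ContinuousOn (fun t ↦ betaOf κ B D f t (y t)) s :=
  ((continuousOn_const.mul hB).mul (hf.comp (continuousOn_id.prodMk hy)
    fun _ ht ↦ ⟨ht, hy_nonneg ht⟩)).div (hD.pow 2) fun t ht ↦ pow_ne_zero 2 (hD0 t ht)

theorem continuousOn_driver {s : Set ℝ} (hB : ContinuousOn B s) (hD : ContinuousOn D s)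
    (hD0 : ∀ t ∈ s, D t ≠ 0) (hf : ContinuousOn (uncurry f) (s ×ˢ Ici 0)) :
    ContinuousOn (uncurry (driver κ B D f)) (s ×ˢ Ici 0) :=
  ((((continuousOn_const.mul hB).div hD hD0).comp continuousOn_fst fun _ hp ↦ hp.1).pow 2).mul
    (hf.pow 2)

theorem driver_nonneg (t y : ℝ) : 0 ≤ driver κ B D f t y := by
  unfold driver
  positivity

theorem driver_le {t y A M : ℝ} (hA : |κ * B t / D t| ≤ A) (hf0 : 0 ≤ f t y) (hfM : f t y ≤ M) :
    driver κ B D f t y ≤ A ^ 2 * M ^ 2 := by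
  rw [driver, ← sq_abs (κ * B t / D t)]
  gcongr

theorem lipschitzOnWith_driver {t A L : ℝ} {u : Set ℝ} (hA : |κ * B t / D t| ≤ A)
    (hf : ∀ y ∈ u, ∀ w ∈ u, |f t y ^ 2 - f t w ^ 2| ≤ L * |y - w|) :
    LipschitzOnWith (A ^ 2 * L).toNNReal (driver κ B D f t) u := by
  refine LipschitzOnWith.of_dist_le' fun y hy w hw ↦ ?_
  have hcA : (κ * B t / D t) ^ 2 ≤ A ^ 2 := sq_le_sq' (abs_le.1 hA).1 (abs_le.1 hA).2
  have hΔ := hf y hy w hw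
  rw [Real.dist_eq, Real.dist_eq, driver, driver, ← mul_sub, abs_mul, abs_sq, mul_assoc]
  calc (κ * B t / D t) ^ 2 * |f t y ^ 2 - f t w ^ 2|
      ≤ (κ * B t / D t) ^ 2 * (L * |y - w|) := mul_le_mul_of_nonneg_left hΔ (sq_nonneg _)
    _ ≤ A ^ 2 * (L * |y - w|) := mul_le_mul_of_nonneg_right hcA ((abs_nonneg _).trans hΔ)

theorem exists_driver_le_and_lipschitzOnWith {a b : ℝ}
    (hB : ContinuousOn B (Icc a b)) (hD : ContinuousOn D (Icc a b))
    (hD0 : ∀ t ∈ Icc a b, D t ≠ 0) (hf_nonneg : ∀ t ∈ Icc a b, ∀ y ≥ (0 : ℝ), 0 ≤ f t y)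
    (hf_bdd : ∃ M, ∀ t ∈ Icc a b, ∀ y ≥ (0 : ℝ), f t y ≤ M)
    (hf_lip : ∀ R > (0 : ℝ), ∃ L, ∀ t ∈ Icc a b, ∀ y ∈ Icc (0 : ℝ) R, ∀ w ∈ Icc (0 : ℝ) R,
        |(f t y) ^ 2 - (f t w) ^ 2| ≤ L * |y - w|) :
    ∃ (C : ℝ) (K : NNReal), (∀ t ∈ Icc a b, ∀ y, 0 ≤ y → driver κ B D f t y ≤ C) ∧
      ∀ t ∈ Icc a b, LipschitzOnWith K (driver κ B D f t) (Icc 0 (C * (b - a))) := by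
  obtain ⟨M, hM⟩ := hf_bdd
  have hc : ContinuousOn (fun t ↦ κ * B t / D t) (Icc a b) :=
    (continuousOn_const.mul hB).div hD hD0
  obtain ⟨A, hA⟩ := isCompact_Icc.exists_bound_of_continuousOn hc
  obtain ⟨L, hL⟩ := hf_lip (max (A ^ 2 * M ^ 2 * (b - a)) 1) (lt_max_of_lt_right one_pos)
  exact ⟨A ^ 2 * M ^ 2, (A ^ 2 * L).toNNReal,
    fun t ht y hy ↦ driver_le (hA t ht) (hf_nonneg t ht y hy) (hM t ht y hy),
    fun t ht ↦ (lipschitzOnWith_driver (hA t ht) (hL t ht)).mono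
      (Icc_subset_Icc_right (le_max_left _ 1))⟩

theorem integral_sq_mul_eq_integral_driver {a b : ℝ} {β : ℝ → ℝ}
    (hD0 : ∀ t ∈ Icc a b, D t ≠ 0)
    (hβ : ∀ t ∈ Icc a b, D t ^ 2 * β t = κ * B t * f t (∫ s in t..b, (D s * β s) ^ 2))
    {t : ℝ} (ht : t ∈ Icc a b) :
    ∫ s in t..b, (D s * β s) ^ 2 =
      ∫ s in t..b, driver κ B D f s (∫ r in s..b, (D r * β r) ^ 2) := by
  refine intervalIntegral.integral_congr fun s hs ↦ ?_
  rw [uIcc_of_le ht.2] at hs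
  have hs' : s ∈ Icc a b := ⟨ht.1.trans hs.1, hs.2⟩
  rw [← sq_mul_betaOf, ← (sq_mul_eq_iff_eq_betaOf (hD0 s hs')).1 (hβ s hs')]

end Driver

theorem stmt3_general (T : ℝ) (κ : ℝ)
    (B D : ℝ → ℝ) (hB : ContinuousOn B (Icc 0 T)) (hD : ContinuousOn D (Icc 0 T))
    (hDpos : ∃ d > 0, ∀ t ∈ Icc 0 T, d ≤ |D t|)
    (f : ℝ → ℝ → ℝ)
    (hfpos : ∀ t ∈ Icc 0 T, ∀ y ≥ (0 : ℝ), 0 < f t y)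
    (hfcont : ContinuousOn (fun p : ℝ × ℝ => f p.1 p.2) (Icc 0 T ×ˢ Ici 0))
    (hfbdd : ∃ M, ∀ t ∈ Icc 0 T, ∀ y ≥ (0 : ℝ), f t y ≤ M)
    (hLip : ∀ R > (0 : ℝ), ∃ L, ∀ t ∈ Icc 0 T, ∀ y ∈ Icc (0 : ℝ) R, ∀ w ∈ Icc (0 : ℝ) R,
        |(f t y) ^ 2 - (f t w) ^ 2| ≤ L * |y - w|) :
    ∃ β : ℝ → ℝ,
      (ContinuousOn β (Icc 0 T) ∧
        ∀ t ∈ Icc 0 T, (D t) ^ 2 * β t = κ * B t * f t (∫ s in t..T, (D s * β s) ^ 2)) ∧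
      ∀ β' : ℝ → ℝ,
        (ContinuousOn β' (Icc 0 T) ∧
          ∀ t ∈ Icc 0 T, (D t) ^ 2 * β' t = κ * B t * f t (∫ s in t..T, (D s * β' s) ^ 2)) →
        EqOn β β' (Icc 0 T) := by
  obtain ⟨d, hd, hdD⟩ := hDpos
  have hD0 : ∀ t ∈ Icc 0 T, D t ≠ 0 := fun t ht ↦ abs_pos.1 (hd.trans_le (hdD t ht))
  obtain ⟨C, K, hG_le, hG_lip⟩ := exists_driver_le_and_lipschitzOnWith (κ := κ) hB hD hD0
    (fun t ht y hy ↦ (hfpos t ht y hy).le) hfbdd hLip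
  have hG := continuousOn_driver (κ := κ) hB hD hD0 hfcont
  have hG_nonneg : ∀ t ∈ Icc 0 T, ∀ y, 0 ≤ y → 0 ≤ driver κ B D f t y :=
    fun t _ y _ ↦ driver_nonneg t y
  obtain ⟨y, hy, hy_nonneg, hy_eq⟩ := exists_nonneg_eq_integral hG hG_nonneg hG_le hG_lip
  refine ⟨fun t ↦ betaOf κ B D f t (y t),
    ⟨continuousOn_betaOf hB hD hD0 hfcont hy hy_nonneg, fun t ht ↦ ?_⟩,
    fun β' ⟨hβ', hβ'_eq⟩ t ht ↦ ?_⟩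
  · simp_rw [sq_mul_betaOf, ← hy_eq t ht]
    exact (sq_mul_eq_iff_eq_betaOf (hD0 t ht)).2 rfl
  have hz_nonneg : MapsTo (fun t ↦ ∫ s in t..T, (D s * β' s) ^ 2) (Icc 0 T) (Ici 0) :=
    fun t ht ↦ intervalIntegral.integral_nonneg ht.2 fun s _ ↦ sq_nonneg _
  show betaOf κ B D f t (y t) = β' t
  rw [(sq_mul_eq_iff_eq_betaOf (hD0 t ht)).1 (hβ'_eq t ht),
    eqOn_of_nonneg_eq_integral hG hG_nonneg hG_le hG_lip hy hy_nonneg hy_eq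
      (continuousOn_integral_left (φ := fun s ↦ (D s * β' s) ^ 2) ((hD.mul hβ').pow 2))
      hz_nonneg (fun t ht ↦ integral_sq_mul_eq_integral_driver hD0 hβ'_eq ht) ht]

/-- Existence and uniqueness of a continuous solution `β` of the integral equation
`|D_t|² β_t = κ B_t f(t, ∫_t^T |D_s β_s|² ds)` on `[0,T]`, for strictly positive,
continuous, uniformly bounded `f` whose square is locally Lipschitz. -/
theorem stmt3 (T : ℝ) (hT : 0 < T) (κ : ℝ) (hκ : 0 < κ)
    (B D : ℝ → ℝ) (hB : ContinuousOn B (Icc 0 T)) (hD : ContinuousOn D (Icc 0 T))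
    (hDpos : ∃ d > 0, ∀ t ∈ Icc 0 T, d ≤ |D t|)
    (f : ℝ → ℝ → ℝ)
    (hfpos : ∀ t ∈ Icc 0 T, ∀ y ≥ (0 : ℝ), 0 < f t y)
    (hfcont : ContinuousOn (fun p : ℝ × ℝ => f p.1 p.2) (Icc 0 T ×ˢ Ici 0))
    (hfbdd : ∃ M, ∀ t ∈ Icc 0 T, ∀ y ≥ (0 : ℝ), f t y ≤ M)
    (hLip : ∀ R > (0 : ℝ), ∃ L, ∀ t ∈ Icc 0 T, ∀ y ∈ Icc (0 : ℝ) R, ∀ w ∈ Icc (0 : ℝ) R,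
        |(f t y) ^ 2 - (f t w) ^ 2| ≤ L * |y - w|) :
    ∃ β : ℝ → ℝ,
      (ContinuousOn β (Icc 0 T) ∧
        ∀ t ∈ Icc 0 T, (D t) ^ 2 * β t = κ * B t * f t (∫ s in t..T, (D s * β s) ^ 2)) ∧
      ∀ β' : ℝ → ℝ,
        (ContinuousOn β' (Icc 0 T) ∧
          ∀ t ∈ Icc 0 T, (D t) ^ 2 * β' t = κ * B t * f t (∫ s in t..T, (D s * β' s) ^ 2)) →
        EqOn β β' (Icc 0 T) :=
  stmt3_general T κ B D hB hD hDpos f hfpos hfcont hfbdd hLip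
end

section
/- Let y : [0,T] → [0,∞) be differentiable with y_T = 0 and suppose θ'_t = y'_t (κ₂ + (1/2) κ₄ y_t)² on [0,T], where θ_t := ∫_t^T |B_s/D_s|² ds, κ₂, κ₄ ≥ 0, κ₂³ + (3/2)κ₄ θ_t > 0. Then κ₂ + (1/2) κ₄ y_t = (κ₂³ + (3/2) κ₄ θ_t)^{1/3} for all t ∈ [0,T]. -/
/-!
With `u = κ₂ + κ₄ y / 2` the equation reads `(3/2) κ₄ θ' = 3 u² u' = (u³)'`, so `u³ - (3/2) κ₄ θ`
is constant on `[0, T]`. At `T` it equals `κ₂³` because `y_T = θ_T = 0`, and since `u ≥ 0` we may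
take cube roots.
-/

open Set

theorem eq_of_hasDerivAt_zero_on_Icc {f : ℝ → ℝ} {a b : ℝ}
    (hf : ∀ x ∈ Icc a b, HasDerivAt f 0 x) {t : ℝ} (ht : t ∈ Icc a b) : f t = f b := by
  have hsub : Icc t b ⊆ Icc a b := Icc_subset_Icc_left ht.1
  refine (constant_of_has_deriv_right_zero (fun x hx => ?_) (fun x hx => ?_) b
    (right_mem_Icc.2 ht.2)).symm
  · exact (hf x (hsub hx)).continuousAt.continuousWithinAt
  · exact (hf x (hsub (Ico_subset_Icc_self hx))).hasDerivWithinAt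

theorem hasDerivAt_integral_div_sq {B D : ℝ → ℝ} (hB : Continuous B) (hD : Continuous D)
    (hD0 : ∀ t, D t ≠ 0) (T t : ℝ) :
    HasDerivAt (fun u => ∫ s in u..T, (B s / D s) ^ 2) (-(B t / D t) ^ 2) t :=
  have hf : Continuous fun s => (B s / D s) ^ 2 := (hB.div hD hD0).pow 2
  intervalIntegral.integral_hasDerivAt_left (hf.intervalIntegrable _ _)
    (hf.stronglyMeasurableAtFilter _ _) hf.continuousAt

theorem hasDerivAt_cube_sub_eq_zero {y θ : ℝ → ℝ} {y' θ' κ2 κ4 t : ℝ}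
    (hy : HasDerivAt y y' t) (hθ : HasDerivAt θ θ' t)
    (hode : θ' = y' * (κ2 + κ4 / 2 * y t) ^ 2) :
    HasDerivAt (fun s => (κ2 + κ4 / 2 * y s) ^ 3 - 3 / 2 * κ4 * θ s) 0 t := by
  have hcube := ((hy.const_mul (κ4 / 2)).const_add κ2).fun_pow 3
  refine (hcube.sub (hθ.const_mul (3 / 2 * κ4))).congr_deriv ?_
  rw [hode]
  push_cast
  ring

theorem eq_rpow_one_third_of_pow_three_eq {u v : ℝ} (hu : 0 ≤ u) (h : u ^ 3 = v) :
    u = v ^ ((1 : ℝ) / 3) := by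
  rw [← h, one_div]
  exact_mod_cast (Real.pow_rpow_inv_natCast hu three_ne_zero).symm

theorem stmt4_general (T : ℝ) (B D : ℝ → ℝ)
    (hB : Continuous B) (hD : Continuous D) (hD0 : ∀ t, D t ≠ 0)
    (κ2 κ4 : ℝ) (hκ2 : 0 ≤ κ2) (hκ4 : 0 ≤ κ4)
    (y y' : ℝ → ℝ)
    (hy : ∀ t, HasDerivAt y (y' t) t) (hyT : y T = 0)
    (hynn : ∀ t ∈ Icc 0 T, 0 ≤ y t)
    (θ : ℝ → ℝ) (hθ : θ = fun t => ∫ s in t..T, (B s / D s) ^ 2)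
    (hode : ∀ t ∈ Icc 0 T, deriv θ t = y' t * (κ2 + κ4 / 2 * y t) ^ 2) :
    ∀ t ∈ Icc 0 T, κ2 + κ4 / 2 * y t = (κ2 ^ 3 + 3 / 2 * κ4 * θ t) ^ ((1 : ℝ) / 3) := by
  intro t ht
  have hθ' : ∀ x, HasDerivAt θ (deriv θ x) x := fun x =>
    (hθ ▸ hasDerivAt_integral_div_sq hB hD hD0 T x).differentiableAt.hasDerivAt
  have hθT : θ T = 0 := by simp [hθ]
  have hconst := eq_of_hasDerivAt_zero_on_Icc
    (fun x hx => hasDerivAt_cube_sub_eq_zero (hy x) (hθ' x) (hode x hx)) ht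
  simp only [hyT, hθT, mul_zero, add_zero, sub_zero] at hconst
  have hu : 0 ≤ κ2 + κ4 / 2 * y t := by have := hynn t ht; positivity
  exact eq_rpow_one_third_of_pow_three_eq hu (by linarith)

/-- If `θ_t = ∫_t^T |B_s/D_s|² ds` and `θ'_t = y'_t (κ₂ + (1/2)κ₄ y_t)²` on `[0,T]`
with `y_T = 0`, `y ≥ 0`, `κ₂, κ₄ ≥ 0` and `κ₂³ + (3/2)κ₄ θ_t > 0`, then
`κ₂ + (1/2)κ₄ y_t = (κ₂³ + (3/2)κ₄ θ_t)^{1/3}` on `[0,T]`. -/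
theorem stmt4 (T : ℝ) (hT : 0 < T) (B D : ℝ → ℝ)
    (hB : Continuous B) (hD : Continuous D) (hD0 : ∀ t, D t ≠ 0)
    (κ2 κ4 : ℝ) (hκ2 : 0 ≤ κ2) (hκ4 : 0 ≤ κ4)
    (y y' : ℝ → ℝ) (hy'c : Continuous y')
    (hy : ∀ t, HasDerivAt y (y' t) t) (hyT : y T = 0)
    (hynn : ∀ t ∈ Icc 0 T, 0 ≤ y t)
    (θ : ℝ → ℝ) (hθ : θ = fun t => ∫ s in t..T, (B s / D s) ^ 2)
    (hode : ∀ t ∈ Icc 0 T, deriv θ t = y' t * (κ2 + κ4 / 2 * y t) ^ 2)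
    (hpos : ∀ t ∈ Icc 0 T, 0 < κ2 ^ 3 + 3 / 2 * κ4 * θ t) :
    ∀ t ∈ Icc 0 T, κ2 + κ4 / 2 * y t = (κ2 ^ 3 + 3 / 2 * κ4 * θ t) ^ ((1 : ℝ) / 3) :=
  stmt4_general T B D hB hD hD0 κ2 κ4 hκ2 hκ4 y y' hy hyT hynn θ hθ hode
end

section
/- Let ψ(t, z₂, …, zₙ) = -(κ₂/2) z₂ + ∑_{j=3}^n (-1)^{j+1} (κ_j/j!) z_j / z₂^{j/2} with κ₂ > 0, and let α_j(y) = (j-1)!! y^{j/2} for even j and 0 for odd j. Then for every y > 0, ∑_{1 ≤ j ≤ n/2} 2j(2j-1) α_{2j-2}(y) ψ_{z_{2j}}(t, α₂(y), …, αₙ(y)) = -κ₂; that is, the standardized-moment correction terms cancel exactly, leaving only the variance coefficient. -/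
open Finset
open Fin.NatCast

/-!
Along the Gaussian curve `y ↦ α(y)` one has `α₂ = y` and `α_{2j}' = j (2j-1) α_{2j-2}` (odd moments
vanish identically), so the weighted sum is `2 · d/dy ψ(α(y))` by the chain rule. The standardized
moments `α_j / α₂^{j/2}` of a Gaussian do not depend on `y`, hence `ψ(α(y)) = -(κ₂/2) y + const`
and the sum is `-κ₂`.
-/

theorem ContinuousLinearMap.apply_eq_sum_mul_single {ι : Type*} [Fintype ι] [DecidableEq ι]
    (L : (ι → ℝ) →L[ℝ] ℝ) (v : ι → ℝ) : L v = ∑ k, v k * L (Pi.single k 1) := by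
  conv_lhs => rw [← univ_sum_single v]
  simp only [map_sum]
  refine sum_congr rfl fun k _ => ?_
  rw [← smul_eq_mul, ← map_smul, ← Pi.single_smul', smul_eq_mul, mul_one]

theorem Finset.sum_range_succ_eq_sum_Icc_two_mul {M : Type*} [AddCommMonoid M] (f : ℕ → M)
    (h0 : f 0 = 0) (hodd : ∀ k, Odd k → f k = 0) (N : ℕ) :
    ∑ k ∈ range (N + 1), f k = ∑ j ∈ Icc 1 (N / 2), f (2 * j) := by
  rw [← sum_image (g := (2 * ·)) (fun _ _ _ _ h => by simpa using h)]
  refine (sum_subset (fun k hk => ?_) fun k hk hk' => ?_).symm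
  · simp only [mem_image, mem_Icc] at hk
    obtain ⟨j, hj, rfl⟩ := hk
    simp only [mem_range]; omega
  · rcases Nat.even_or_odd k with ⟨j, rfl⟩ | hk
    · rcases Nat.eq_zero_or_pos j with rfl | hj
      · exact h0
      · refine absurd (mem_image.2 ⟨j, mem_Icc.2 ⟨hj, ?_⟩, by ring⟩) hk'
        simp only [mem_range] at hk; omega
    · exact hodd k hk

noncomputable def gaussianMoment (k : ℕ) (y : ℝ) : ℝ :=
  if Even k then (Nat.doubleFactorial (k - 1) : ℝ) * y ^ (k / 2) else 0

theorem gaussianMoment_two (y : ℝ) : gaussianMoment 2 y = y := by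
  simp [gaussianMoment]

theorem gaussianMoment_of_odd {k : ℕ} (hk : Odd k) (y : ℝ) : gaussianMoment k y = 0 := by
  simp [gaussianMoment, Nat.not_even_iff_odd.2 hk]

theorem gaussianMoment_two_mul (j : ℕ) (y : ℝ) :
    gaussianMoment (2 * j) y = (Nat.doubleFactorial (2 * j - 1) : ℝ) * y ^ j := by
  simp [gaussianMoment]

theorem gaussianMoment_div_rpow {y : ℝ} (hy : y ≠ 0) (k : ℕ) :
    gaussianMoment k y / y ^ ((k : ℝ) / 2) = gaussianMoment k 1 := by
  rcases Nat.even_or_odd k with ⟨j, rfl⟩ | hk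
  · rw [← two_mul, gaussianMoment_two_mul, gaussianMoment_two_mul, Nat.cast_mul,
      Nat.cast_two, mul_div_cancel_left₀ _ two_ne_zero, Real.rpow_natCast, one_pow, mul_one,
      mul_div_cancel_right₀ _ (pow_ne_zero _ hy)]
  · simp [gaussianMoment_of_odd hk]

theorem sub_one_mul_gaussianMoment_sub_two_of_odd {k : ℕ} (hk : Odd k) (y : ℝ) :
    ((k : ℝ) - 1) * gaussianMoment (k - 2) y = 0 := by
  obtain ⟨i, rfl⟩ := hk
  rcases i with _ | i
  · simp
  · rw [show 2 * (i + 1) + 1 - 2 = 2 * i + 1 by omega,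
      gaussianMoment_of_odd (odd_two_mul_add_one i), mul_zero]

theorem hasDerivAt_gaussianMoment (k : ℕ) (y : ℝ) :
    HasDerivAt (gaussianMoment k) ((k : ℝ) / 2 * ((k : ℝ) - 1) * gaussianMoment (k - 2) y) y := by
  rcases Nat.even_or_odd k with ⟨j, rfl⟩ | hk
  · rw [← two_mul, show gaussianMoment (2 * j) =
        fun s => (Nat.doubleFactorial (2 * j - 1) : ℝ) * s ^ j from
      funext (gaussianMoment_two_mul j)]
    refine ((hasDerivAt_pow j y).const_mul _).congr_deriv ?_
    rcases j with _ | j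
    · simp
    · rw [show 2 * (j + 1) - 2 = 2 * j by omega, gaussianMoment_two_mul,
        show 2 * (j + 1) - 1 = 2 * j + 1 by omega, Nat.doubleFactorial_add_one]
      push_cast
      ring
  · rw [show gaussianMoment k = fun _ => 0 from funext (gaussianMoment_of_odd hk), mul_assoc,
      sub_one_mul_gaussianMoment_sub_two_of_odd hk, mul_zero]
    exact hasDerivAt_const y 0

theorem ContinuousLinearMap.apply_eq_sum_Icc_two_mul {n : ℕ} (L : (Fin (n + 1) → ℝ) →L[ℝ] ℝ)
    (c : ℕ → ℝ) (h0 : c 0 = 0) (hodd : ∀ k, Odd k → c k = 0) :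
    L (fun k => c k) =
      ∑ j ∈ Icc 1 (n / 2), c (2 * j) * L (Pi.single ((2 * j : ℕ) : Fin (n + 1)) 1) := by
  have hrange :=
    Fin.sum_univ_eq_sum_range (fun k => c k * L (Pi.single (k : Fin (n + 1)) 1)) (n + 1)
  simp only [Fin.cast_val_eq_self] at hrange
  rw [L.apply_eq_sum_mul_single, hrange]
  exact sum_range_succ_eq_sum_Icc_two_mul _ (by simp [h0]) (fun k hk => by simp [hodd k hk]) n

theorem Fin.val_two_of_two_le {n : ℕ} (hn : 2 ≤ n) : ((2 : Fin (n + 1)) : ℕ) = 2 := by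
  rw [Fin.coe_ofNat_eq_mod, Nat.mod_eq_of_lt (by omega)]

noncomputable def standardizedMomentPreference (n : ℕ) (κ : ℕ → ℝ) (z : Fin (n + 1) → ℝ) : ℝ :=
  -(κ 2 / 2) * z 2 + ∑ j ∈ Icc 3 n, (-1 : ℝ) ^ (j + 1) * (κ j / (Nat.factorial j : ℝ)) *
    z ((j : ℕ) : Fin (n + 1)) / (z 2) ^ ((j : ℝ) / 2)

theorem differentiableAt_standardizedMomentPreference {n : ℕ} (κ : ℕ → ℝ) {z : Fin (n + 1) → ℝ}
    (hz : 0 < z 2) : DifferentiableAt ℝ (standardizedMomentPreference n κ) z := by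
  unfold standardizedMomentPreference
  -- `0 < z 2`, not `z 2 ≠ 0`: for a negative base `Real.rpow` can vanish, e.g. `(-1) ^ (1/2) = 0`.
  fun_prop (disch := first | exact Or.inl hz.ne' | exact (Real.rpow_pos_of_pos hz _).ne')

theorem standardizedMomentPreference_gaussianMoment {n : ℕ} (hn : 2 ≤ n) (κ : ℕ → ℝ) {s : ℝ}
    (hs : s ≠ 0) :
    standardizedMomentPreference n κ (fun k => gaussianMoment k s) =
      -(κ 2 / 2) * s + ∑ j ∈ Icc 3 n, (-1 : ℝ) ^ (j + 1) * (κ j / (Nat.factorial j : ℝ)) *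
        gaussianMoment j 1 := by
  simp only [standardizedMomentPreference, Fin.val_two_of_two_le hn, gaussianMoment_two]
  congr 1
  refine sum_congr rfl fun j hj => ?_
  rw [Fin.val_cast_of_lt (Nat.lt_succ_of_le (mem_Icc.1 hj).2), mul_div_assoc,
    gaussianMoment_div_rpow hs]

theorem hasDerivAt_standardizedMomentPreference_gaussianMoment {n : ℕ} (hn : 2 ≤ n) (κ : ℕ → ℝ)
    {y : ℝ} (hy : y ≠ 0) :
    HasDerivAt (fun s => standardizedMomentPreference n κ (fun k => gaussianMoment k s))
      (-(κ 2 / 2)) y := by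
  refine HasDerivAt.congr_of_eventuallyEq ?_ (Filter.eventually_of_mem (isOpen_ne.mem_nhds hy)
    fun s hs => standardizedMomentPreference_gaussianMoment hn κ hs)
  exact (((hasDerivAt_id y).const_mul _).add_const _).congr_deriv (mul_one _)

theorem stmt18_general (n : ℕ) (hn : 2 ≤ n) (κ : ℕ → ℝ)
    (ψ : (Fin (n + 1) → ℝ) → ℝ)
    (hψ : ∀ z : Fin (n + 1) → ℝ, ψ z = -(κ 2 / 2) * z 2 +
        ∑ j ∈ Icc 3 n, (-1 : ℝ) ^ (j + 1) * (κ j / (Nat.factorial j : ℝ)) *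
          z ((j : ℕ) : Fin (n + 1)) / (z 2) ^ ((j : ℝ) / 2))
    (y : ℝ) (hy : 0 < y)
    (α : ℕ → ℝ)
    (hα : ∀ j, α j = if Even j then (Nat.doubleFactorial (j - 1) : ℝ) * y ^ (j / 2) else 0) :
    ∑ j ∈ Icc 1 (n / 2), (2 * j : ℝ) * (2 * (j : ℝ) - 1) * α (2 * j - 2) *
        (fderiv ℝ ψ (fun k => α (k : ℕ)) (Pi.single ((2 * j : ℕ) : Fin (n + 1)) 1))
      = -(κ 2) := by
  obtain rfl : ψ = standardizedMomentPreference n κ := funext hψ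
  obtain rfl : α = fun j => gaussianMoment j y := funext hα
  set γ : ℝ → Fin (n + 1) → ℝ := fun s k => gaussianMoment k s
  set c : ℕ → ℝ := fun k => (k : ℝ) / 2 * ((k : ℝ) - 1) * gaussianMoment (k - 2) y
  have hγ : HasDerivAt γ (fun k => c k) y := hasDerivAt_pi.2 fun k => hasDerivAt_gaussianMoment k y
  have hγ2 : 0 < γ y 2 := by
    rwa [show γ y 2 = gaussianMoment ((2 : Fin (n + 1)) : ℕ) y from rfl, Fin.val_two_of_two_le hn,
      gaussianMoment_two]
  have hchain :=
    (differentiableAt_standardizedMomentPreference κ hγ2).hasFDerivAt.comp_hasDerivAt y hγ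
  have hsum := hchain.unique (hasDerivAt_standardizedMomentPreference_gaussianMoment hn κ hy.ne')
  rw [ContinuousLinearMap.apply_eq_sum_Icc_two_mul _ c (by simp [c]) fun k hk => by
    simp only [c, mul_assoc, sub_one_mul_gaussianMoment_sub_two_of_odd hk, mul_zero]] at hsum
  rw [← neg_div, eq_div_iff two_ne_zero, sum_mul] at hsum
  rw [← hsum]
  refine sum_congr rfl fun j _ => ?_
  simp only [c]
  push_cast
  ring

/-- For the mean-variance-standardized-moments preference
`ψ(t,z₂,…,zₙ) = -(κ₂/2)z₂ + ∑_{j=3}^n (-1)^{j+1}(κ_j/j!) z_j/z₂^{j/2}`, evaluated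
at the Gaussian central moments `α_j(y) = (j-1)!! y^{j/2}` (even `j`; `0` for odd
`j`), the weighted derivative sum collapses:
`∑_{1≤j≤n/2} 2j(2j-1) α_{2j-2}(y) ψ_{z_{2j}}(α(y)) = -κ₂` for every `y > 0`. -/
theorem stmt18 (n : ℕ) (hn : 2 ≤ n) (κ : ℕ → ℝ) (hκ2 : 0 < κ 2)
    (ψ : (Fin (n + 1) → ℝ) → ℝ)
    (hψ : ∀ z : Fin (n + 1) → ℝ, ψ z = -(κ 2 / 2) * z 2 +
        ∑ j ∈ Icc 3 n, (-1 : ℝ) ^ (j + 1) * (κ j / (Nat.factorial j : ℝ)) *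
          z ((j : ℕ) : Fin (n + 1)) / (z 2) ^ ((j : ℝ) / 2))
    (y : ℝ) (hy : 0 < y)
    (α : ℕ → ℝ)
    (hα : ∀ j, α j = if Even j then (Nat.doubleFactorial (j - 1) : ℝ) * y ^ (j / 2) else 0) :
    ∑ j ∈ Icc 1 (n / 2), (2 * j : ℝ) * (2 * (j : ℝ) - 1) * α (2 * j - 2) *
        (fderiv ℝ ψ (fun k => α (k : ℕ)) (Pi.single ((2 * j : ℕ) : Fin (n + 1)) 1))
      = -(κ 2) :=
  stmt18_general n hn κ ψ hψ y hy α hα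
end
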